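/- arXiv:math/0505295 — 2 statements merged into one kernel-verified Lean document; each statement's English description precedes it below -/
import Mathlib

section
/- For all natural numbers n, m and every k ≥ 1: s(n) ≡ s(m) (mod 2^k) if and only if n ≡ m (mod 2^k). (In particular, for each k the map s induces a permutation of the residue classes modulo 2^k.) -/
/-- The sloping binary number `s n`: `n` plus the sum of `2^k` over all `k ≥ 1`
with `n + k ≡ 0 (mod 2^k)`. All such `k` satisfy `k ≤ n`, so the sum is finite. -/
def s (n : ℕ) : ℕ := n + ∑ k ∈ Finset.Icc 1 n, if 2 ^ k ∣ (n + k) then 2 ^ k else 0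

lemma term_zero (n j : ℕ) (hjn : n < j) : ¬ 2 ^ j ∣ (n + j) := by
  intro h
  have h2 : 2 * j ≤ 2 ^ j := by
    have hj1 : 1 ≤ j := by omega
    have : j - 1 < 2 ^ (j - 1) := by exact Nat.lt_two_pow_self
    have : j ≤ 2 ^ (j - 1) := by omega
    calc 2 * j ≤ 2 * 2 ^ (j - 1) := by omega
      _ = 2 ^ (j - 1 + 1) := by ring
      _ = 2 ^ j := by congr 1; omega
  have := Nat.le_of_dvd (by omega) h
  omega

lemma s_mod (n k : ℕ) (hk : 1 ≤ k) :
    s n ≡ n + ∑ j ∈ Finset.Ico 1 k, (if 2 ^ j ∣ (n + j) then 2 ^ j else 0) [MOD 2 ^ k] := by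
  have h1 : (∑ j ∈ Finset.Icc 1 n, if 2 ^ j ∣ (n + j) then 2 ^ j else 0)
      = ∑ j ∈ Finset.Ico 1 (n + k + 1), if 2 ^ j ∣ (n + j) then 2 ^ j else 0 := by
    apply Finset.sum_subset
    · intro x hx
      simp only [Finset.mem_Icc, Finset.mem_Ico] at *
      omega
    · intro x hx hx'
      simp only [Finset.mem_Icc, Finset.mem_Ico] at *
      have : n < x := by omega
      rw [if_neg (term_zero n x this)]
  have h2 : (∑ j ∈ Finset.Ico 1 k, if 2 ^ j ∣ (n + j) then 2 ^ j else 0)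
      + (∑ j ∈ Finset.Ico k (n + k + 1), if 2 ^ j ∣ (n + j) then 2 ^ j else 0)
      = ∑ j ∈ Finset.Ico 1 (n + k + 1), if 2 ^ j ∣ (n + j) then 2 ^ j else 0 :=
    Finset.sum_Ico_consecutive _ hk (by omega)
  have h3 : 2 ^ k ∣ ∑ j ∈ Finset.Ico k (n + k + 1), if 2 ^ j ∣ (n + j) then 2 ^ j else 0 := by
    apply Finset.dvd_sum
    intro j hj
    simp only [Finset.mem_Ico] at hj
    split
    · exact pow_dvd_pow 2 hj.1
    · exact dvd_zero _
  unfold s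
  rw [h1, ← h2]
  have : n + ((∑ j ∈ Finset.Ico 1 k, if 2 ^ j ∣ (n + j) then 2 ^ j else 0)
      + (∑ j ∈ Finset.Ico k (n + k + 1), if 2 ^ j ∣ (n + j) then 2 ^ j else 0))
      ≡ n + ((∑ j ∈ Finset.Ico 1 k, if 2 ^ j ∣ (n + j) then 2 ^ j else 0) + 0) [MOD 2 ^ k] := by
    apply Nat.ModEq.add_left
    apply Nat.ModEq.add_left
    exact (Nat.modEq_zero_iff_dvd).2 h3
  simpa [← add_assoc] using this

lemma sum_congr_of_modeq {n m k K : ℕ} (h : n ≡ m [MOD 2 ^ k]) (hK : K ≤ k + 1) :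
    (∑ j ∈ Finset.Ico 1 K, if 2 ^ j ∣ (n + j) then 2 ^ j else 0)
      = ∑ j ∈ Finset.Ico 1 K, if 2 ^ j ∣ (m + j) then 2 ^ j else 0 := by
  apply Finset.sum_congr rfl
  intro j hj
  simp only [Finset.mem_Ico] at hj
  have hdvd : (2 : ℕ) ^ j ∣ 2 ^ k := pow_dvd_pow 2 (by omega)
  have hj' : n + j ≡ m + j [MOD 2 ^ j] := (Nat.ModEq.of_dvd hdvd h).add_right j
  have : 2 ^ j ∣ n + j ↔ 2 ^ j ∣ m + j := by
    rw [Nat.dvd_iff_mod_eq_zero, Nat.dvd_iff_mod_eq_zero, hj']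
  simp [this]

lemma forward : ∀ k n m, s n ≡ s m [MOD 2 ^ k] → n ≡ m [MOD 2 ^ k] := by
  intro k
  induction k with
  | zero => intro n m _; simp [Nat.ModEq, Nat.mod_one]
  | succ k ih =>
    intro n m h
    have hk : n ≡ m [MOD 2 ^ k] :=
      ih n m (Nat.ModEq.of_dvd (pow_dvd_pow 2 (Nat.le_succ k)) h)
    have h1 := s_mod n (k + 1) (by omega)
    have h2 := s_mod m (k + 1) (by omega)
    have hs := sum_congr_of_modeq (K := k + 1) hk (le_refl _)
    have hcalc : n + (∑ j ∈ Finset.Ico 1 (k + 1), if 2 ^ j ∣ (n + j) then 2 ^ j else 0)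
        ≡ m + (∑ j ∈ Finset.Ico 1 (k + 1), if 2 ^ j ∣ (m + j) then 2 ^ j else 0)
        [MOD 2 ^ (k + 1)] := h1.symm.trans (h.trans h2)
    rw [← hs] at hcalc
    exact Nat.ModEq.add_right_cancel' _ hcalc

theorem sloping_mod_equiv (n m k : ℕ) (hk : 1 ≤ k) :
    s n ≡ s m [MOD 2 ^ k] ↔ n ≡ m [MOD 2 ^ k] := by
  constructor
  · exact forward k n m
  · intro h
    have h1 := s_mod n k hk
    have h2 := s_mod m k hk
    have hs := sum_congr_of_modeq h (Nat.le_succ k)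
    calc s n ≡ _ [MOD 2 ^ k] := h1
      _ ≡ _ [MOD 2 ^ k] := by rw [hs]; exact h.add_right _
      _ ≡ s m [MOD 2 ^ k] := h2.symm
end

section
/- The average order of s(n) is n + O(log n): there exists a constant C > 0 such that for all natural numbers N ≥ 2, Σ_{n=0}^{N−1} (s(n) − n) ≤ C · N · log N. -/
private lemma inner_le (N k : ℕ) (hk : 1 ≤ k) (hkN : k ≤ N) :
    (∑ n ∈ Finset.range N, if 2 ^ k ∣ (n + k) then 2 ^ k else 0) ≤ 2 * N := by
  classical
  rw [← Finset.sum_filter, Finset.sum_const, smul_eq_mul]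
  have hcard : (Finset.filter (fun n => 2 ^ k ∣ (n + k)) (Finset.range N)).card
      ≤ (N - 1 + k) / 2 ^ k := by
    have h := Finset.card_le_card_of_injOn (f := fun n => (n + k) / 2 ^ k)
      (s := Finset.filter (fun n => 2 ^ k ∣ (n + k)) (Finset.range N))
      (t := Finset.Icc 1 ((N - 1 + k) / 2 ^ k)) ?_ ?_
    · simpa using h
    · intro n hn
      simp only [Finset.coe_filter, Set.mem_setOf_eq, Finset.mem_filter, Finset.mem_range] at hn
      obtain ⟨hnN, hdvd⟩ := hn
      have h1 : 2 ^ k ≤ n + k := Nat.le_of_dvd (by omega) hdvd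
      simp only [Finset.coe_Icc, Set.mem_Icc, Finset.mem_Icc]
      constructor
      · exact (Nat.one_le_div_iff (Nat.pow_pos (n := k) (by norm_num))).2 h1
      · exact Nat.div_le_div_right (by omega)
    · intro a ha b hb hab
      simp only [Finset.coe_filter, Set.mem_setOf_eq, Finset.mem_range] at ha hb
      have h1 := Nat.div_mul_cancel ha.2
      have h2 := Nat.div_mul_cancel hb.2
      have hab' : (a + k) / 2 ^ k = (b + k) / 2 ^ k := hab
      rw [hab'] at h1
      omega
  calc Finset.card _ * 2 ^ k ≤ ((N - 1 + k) / 2 ^ k) * 2 ^ k :=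
        Nat.mul_le_mul_right _ hcard
    _ ≤ N - 1 + k := Nat.div_mul_le_self _ _
    _ ≤ 2 * N := by omega

private lemma inner_zero (N k : ℕ) (hk : 1 ≤ k) (hkN : k ≤ N) (h : 2 * N < 2 ^ k) :
    (∑ n ∈ Finset.range N, if 2 ^ k ∣ (n + k) then 2 ^ k else 0) = 0 := by
  apply Finset.sum_eq_zero
  intro n hn
  rw [Finset.mem_range] at hn
  rw [if_neg]
  intro hdvd
  have h1 : 2 ^ k ≤ n + k := Nat.le_of_dvd (by omega) hdvd
  have h2 : 2 ^ k > k := Nat.lt_two_pow_self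
  omega

private lemma key (N : ℕ) (hN : 2 ≤ N) :
    (∑ n ∈ Finset.range N, ∑ k ∈ Finset.Icc 1 n, if 2 ^ k ∣ (n + k) then 2 ^ k else 0)
      ≤ 2 * N * (Nat.log 2 N + 1) := by
  classical
  have h1 : (∑ n ∈ Finset.range N, ∑ k ∈ Finset.Icc 1 n,
        if 2 ^ k ∣ (n + k) then 2 ^ k else 0)
      ≤ ∑ n ∈ Finset.range N, ∑ k ∈ Finset.Icc 1 N,
        if 2 ^ k ∣ (n + k) then 2 ^ k else 0 := by
    apply Finset.sum_le_sum
    intro n hn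
    apply Finset.sum_le_sum_of_subset
    exact Finset.Icc_subset_Icc_right (by rw [Finset.mem_range] at hn; omega)
  rw [Finset.sum_comm] at h1
  have h2 : (∑ k ∈ Finset.Icc 1 N, ∑ n ∈ Finset.range N,
        if 2 ^ k ∣ (n + k) then 2 ^ k else 0)
      ≤ ∑ k ∈ Finset.Icc 1 N, if 2 ^ k ≤ 2 * N then 2 * N else 0 := by
    apply Finset.sum_le_sum
    intro k hk
    rw [Finset.mem_Icc] at hk
    by_cases hc : 2 ^ k ≤ 2 * N
    · rw [if_pos hc]; exact inner_le N k hk.1 hk.2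
    · rw [if_neg hc, inner_zero N k hk.1 hk.2 (by omega)]
  have h3 : (∑ k ∈ Finset.Icc 1 N, if 2 ^ k ≤ 2 * N then 2 * N else 0)
      ≤ 2 * N * (Nat.log 2 N + 1) := by
    rw [← Finset.sum_filter, Finset.sum_const, smul_eq_mul]
    have hsub : (Finset.Icc 1 N).filter (fun k => 2 ^ k ≤ 2 * N)
        ⊆ Finset.Icc 1 (Nat.log 2 (2 * N)) := by
      intro k hk
      simp only [Finset.mem_filter, Finset.mem_Icc] at hk ⊢
      refine ⟨hk.1.1, ?_⟩
      exact (Nat.le_log_iff_pow_le (by norm_num) (by omega)).2 hk.2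
    have hcard : ((Finset.Icc 1 N).filter (fun k => 2 ^ k ≤ 2 * N)).card
        ≤ Nat.log 2 (2 * N) := by
      have := Finset.card_le_card hsub
      simpa using this
    have hlog : Nat.log 2 (2 * N) = Nat.log 2 N + 1 := by
      rw [mul_comm]
      exact Nat.log_mul_base (by norm_num) (by omega)
    calc _ ≤ Nat.log 2 (2 * N) * (2 * N) := Nat.mul_le_mul_right _ hcard
      _ = 2 * N * (Nat.log 2 N + 1) := by rw [hlog]; ring
  exact h1.trans (h2.trans h3)

theorem sloping_average_order :
    ∃ C : ℝ, 0 < C ∧ ∀ N : ℕ, 2 ≤ N →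
      (∑ n ∈ Finset.range N, ((s n : ℝ) - n)) ≤ C * N * Real.log N := by
  refine ⟨6, by norm_num, fun N hN => ?_⟩
  have h2 : (∑ n ∈ Finset.range N, ((s n : ℝ) - n))
      = ((∑ n ∈ Finset.range N, ∑ k ∈ Finset.Icc 1 n,
          if 2 ^ k ∣ (n + k) then 2 ^ k else 0 : ℕ) : ℝ) := by
    rw [Nat.cast_sum]
    apply Finset.sum_congr rfl
    intro n _
    have : (s n : ℝ) = (n : ℝ) + ((∑ k ∈ Finset.Icc 1 n,
        if 2 ^ k ∣ (n + k) then 2 ^ k else 0 : ℕ) : ℝ) := by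
      rw [s]; push_cast; ring
    rw [this]; ring
  rw [h2]
  have hkey := key N hN
  have hcast : ((∑ n ∈ Finset.range N, ∑ k ∈ Finset.Icc 1 n,
      if 2 ^ k ∣ (n + k) then 2 ^ k else 0 : ℕ) : ℝ)
      ≤ 2 * (N : ℝ) * ((Nat.log 2 N : ℝ) + 1) := by
    exact_mod_cast hkey
  refine hcast.trans ?_
  have hL : (Nat.log 2 N : ℝ) ≤ Real.log N / Real.log 2 := by
    have h := Real.natLog_le_logb N 2
    rwa [Real.logb] at h
  have hlogN : Real.log 2 ≤ Real.log N := by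
    apply Real.log_le_log (by norm_num)
    exact_mod_cast hN
  have hlog2 : (0.6931 : ℝ) < Real.log 2 := by
    have := Real.log_two_gt_d9
    linarith
  have hNpos : (2 : ℝ) ≤ (N : ℝ) := by exact_mod_cast hN
  have hLb : (Nat.log 2 N : ℝ) ≤ Real.log N / 0.6931 := by
    refine hL.trans ?_
    gcongr <;> linarith
  have hlogNpos : (0.6931 : ℝ) ≤ Real.log N := by linarith
  have hlogpos : (0 : ℝ) ≤ Real.log N := by linarith
  have h1 : ((Nat.log 2 N : ℝ) + 1) ≤ 3 * Real.log N := by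
    have ha : (1 : ℝ) ≤ Real.log N / 0.6931 := by
      rw [le_div_iff₀ (by norm_num)]; linarith
    have hb : Real.log N / 0.6931 ≤ 1.5 * Real.log N := by
      rw [div_le_iff₀ (by norm_num)]; linarith
    linarith
  calc 2 * (N : ℝ) * ((Nat.log 2 N : ℝ) + 1) ≤ 2 * (N : ℝ) * (3 * Real.log N) := by
        apply mul_le_mul_of_nonneg_left h1 (by linarith)
    _ = 6 * N * Real.log N := by ring
end
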